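/- Define A_{d,j} for integers d, j ≥ 1 by A_{d,j} = 1 if d = j and A_{d,j} = −C(d−1, j) if d ≠ j. Then for all integers d, j ≥ 1, ∑_{k=1}^{d} A_{d,k}·B_{k,j} equals 1 if d = j and 0 otherwise; that is, the lower-triangular matrices A and B are mutually inverse. -/
import Mathlib


/-- The doubly-indexed integers `B d j`: `B d j = 0` for `d < j`, `B j j = 1`, and
`B (d+1) j = ∑_{k=j}^{d} C(d,k) * B k j` for `d ≥ j`. -/
def Bmat : ℕ → ℕ → ℕ
  | 0, j => if 0 = j then 1 else 0
  | d + 1, j =>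
    if d + 1 < j then 0
    else if d + 1 = j then 1
    else ∑ k ∈ (Finset.Icc j d).attach, Nat.choose d k.1 * Bmat k.1 j
  decreasing_by
    have := (Finset.mem_Icc.mp k.2).2; omega

/-- The matrix `A d j = 1` if `d = j`, and `A d j = -C(d-1, j)` otherwise. -/
def Amat (d j : ℕ) : ℤ := if d = j then 1 else -(Nat.choose (d - 1) j : ℤ)

lemma Bmat_lt {k j : ℕ} (h : k < j) : Bmat k j = 0 := by
  cases k with
  | zero => unfold Bmat; simp; omega
  | succ n => unfold Bmat; rw [if_pos h]

lemma Bmat_diag (j : ℕ) : Bmat j j = 1 := by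
  cases j with
  | zero => unfold Bmat; simp
  | succ n => unfold Bmat; simp

lemma Bmat_rec (d j : ℕ) (h : j ≤ d) :
    Bmat (d + 1) j = ∑ k ∈ Finset.Icc j d, Nat.choose d k * Bmat k j := by
  conv_lhs => rw [Bmat]
  rw [if_neg (by omega), if_neg (by omega)]
  exact Finset.sum_attach (Finset.Icc j d) (fun k => Nat.choose d k * Bmat k j)

theorem stmt_15 (d j : ℕ) (hd : 1 ≤ d) (hj : 1 ≤ j) :
    ∑ k ∈ Finset.Icc 1 d, Amat d k * (Bmat k j : ℤ) = if d = j then 1 else 0 := by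
  rcases lt_trichotomy d j with h | h | h
  · rw [if_neg (by omega)]
    apply Finset.sum_eq_zero
    intro k hk
    have hk' := Finset.mem_Icc.mp hk
    rw [Bmat_lt (by omega : k < j)]
    simp
  · subst h
    rw [if_pos rfl]
    rw [Finset.sum_eq_single d]
    · rw [Bmat_diag]; simp [Amat]
    · intro k hk hne
      have hk' := Finset.mem_Icc.mp hk
      rw [Bmat_lt (by omega : k < d)]; simp
    · intro hnot
      exact absurd (Finset.mem_Icc.mpr ⟨hd, le_refl d⟩) hnot
  · rw [if_neg (by omega)]
    obtain ⟨d', rfl⟩ : ∃ d', d = d' + 1 := ⟨d - 1, by omega⟩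
    have hjd' : j ≤ d' := by omega
    rw [Finset.sum_Icc_succ_top (by omega)]
    have hA : Amat (d' + 1) (d' + 1) = 1 := by simp [Amat]
    rw [hA, one_mul]
    have : ∑ k ∈ Finset.Icc 1 d', Amat (d' + 1) k * (Bmat k j : ℤ) =
        -∑ k ∈ Finset.Icc j d', (Nat.choose d' k * Bmat k j : ℤ) := by
      rw [← Finset.sum_neg_distrib]
      rw [← Finset.sum_subset (Finset.Icc_subset_Icc_left hj)]
      · apply Finset.sum_congr rfl
        intro k hk
        have hk' := Finset.mem_Icc.mp hk
        have : Amat (d' + 1) k = -(Nat.choose d' k : ℤ) := by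
          simp [Amat, show d' + 1 ≠ k by omega]
        rw [this]; ring
      · intro k hk hnk
        have hk' := Finset.mem_Icc.mp hk
        simp at hnk
        rw [Bmat_lt (by omega : k < j)]
        simp
    rw [this, Bmat_rec _ _ hjd']
    push_cast
    ring
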